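/- arXiv:1205.1074 — 4 statements merged into one kernel-verified Lean document; each statement's English description precedes it below -/
import Mathlib

section
/- If λ is a Salem number of degree s and k is a positive natural number, then λ^k is a Salem number of degree s, and the set of Galois conjugates of λ^k is precisely the set of k-th powers of the Galois conjugates of λ. -/
/-- A Salem number: a real algebraic integer `l > 1` whose minimal polynomial over ℚ
is reciprocal and has exactly two roots of absolute value different from 1. -/
def IsSalemNumber (l : ℝ) : Prop :=
  1 < l ∧ IsIntegral ℤ l ∧ (minpoly ℚ l).reverse = minpoly ℚ l ∧
    (((minpoly ℚ l).aroots ℂ).filter (fun z => ‖z‖ ≠ 1)).card = 2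

/-! The conjugates of `l ^ k` are the `k`-th powers of the conjugates of `l`, since every
embedding of `ℚ(l ^ k)` into `ℂ` extends to `ℚ(l)`. Only `l` and `l⁻¹` are conjugates of `l` off
the unit circle, so `l` is the only conjugate `z` with `z ^ k = l ^ k`; by separability
`l ∈ ℚ(l ^ k)`, and the degrees agree. The conjugates of `l ^ k` off the unit circle are then
`l ^ k` and `l⁻ᵏ`, and `l⁻ᵏ` being a conjugate of `l ^ k` forces its minimal polynomial to be
reciprocal. -/

open Polynomial IntermediateField

section Conjugates

variable {K E L : Type*} [Field K] [Field E] [Field L] [Algebra K E] [Algebra K L]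

theorem aeval_minpoly_aeval_eq_zero {x : E} {y : L} (f : K[X])
    (hy : aeval y (minpoly K x) = 0) : aeval (aeval y f) (minpoly K (aeval x f)) = 0 := by
  have hdvd : minpoly K x ∣ (minpoly K (aeval x f)).comp f :=
    minpoly.dvd K x (by rw [aeval_comp, minpoly.aeval])
  rw [← aeval_comp]
  exact aeval_eq_zero_of_dvd_aeval_eq_zero hdvd hy

theorem aeval_mem_adjoin_simple (x : E) (f : K[X]) : aeval x f ∈ K⟮x⟯ := by
  simpa using (aeval (AdjoinSimple.gen K x) f).2

theorem setOf_aeval_minpoly_aeval_eq_image [IsAlgClosed L] {x : E} (hx : IsIntegral K x)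
    (f : K[X]) :
    {z : L | aeval z (minpoly K (aeval x f)) = 0} =
      (fun z => aeval z f) '' {z : L | aeval z (minpoly K x) = 0} := by
  refine Set.Subset.antisymm (fun w hw => ?_) ?_
  · have hsplit : ∀ s ∈ ({x} : Set E),
        IsIntegral K s ∧ ((minpoly K s).map (algebraMap K L)).Splits := by
      rintro s rfl
      exact ⟨hx, IsAlgClosed.splits _⟩
    obtain ⟨φ, hφ⟩ := exists_algHom_adjoin_of_splits_of_aeval hsplit
      (aeval_mem_adjoin_simple x f) hw
    refine ⟨φ (AdjoinSimple.gen K x), ?_, ?_⟩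
    · show aeval _ _ = 0
      rw [aeval_algHom_apply, ← minpoly_gen, minpoly.aeval, map_zero]
    · show aeval _ f = w
      rw [aeval_algHom_apply, ← hφ]
      congr 1
      ext
      simp
  · rintro _ ⟨y, hy, rfl⟩
    exact aeval_minpoly_aeval_eq_zero f hy

theorem setOf_aeval_minpoly_pow_eq_image [IsAlgClosed L] {x : E} (hx : IsIntegral K x) (k : ℕ) :
    {z : L | aeval z (minpoly K (x ^ k)) = 0} =
      (fun z => z ^ k) '' {z : L | aeval z (minpoly K x) = 0} := by
  simpa using setOf_aeval_minpoly_aeval_eq_image (L := L) hx (X ^ k)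

theorem natDegree_le_one_of_separable_of_forall_aeval_eq_zero [IsAlgClosed L] {p : K[X]}
    (hp : p.Separable) {a : L} (h : ∀ z : L, aeval z p = 0 → z = a) : p.natDegree ≤ 1 := by
  rw [← card_rootSet_eq_natDegree hp (IsAlgClosed.splits (p.map (algebraMap K L))),
    Fintype.card_le_one_iff]
  rintro ⟨z, hz⟩ ⟨w, hw⟩
  rw [mem_rootSet] at hz hw
  exact Subtype.ext ((h z hz.2).trans (h w hw.2).symm)

theorem mem_adjoin_simple_aeval_of_forall [IsAlgClosed L] {x : L} (hx : IsSeparable K x)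
    (f : K[X]) (h : ∀ z : L, aeval z (minpoly K x) = 0 → aeval z f = aeval x f → z = x) :
    x ∈ K⟮aeval x f⟯ := by
  set F := K⟮aeval x f⟯
  have hxF : IsIntegral F x := hx.isIntegral.tower_top
  have hroots : ∀ z : L, aeval z (minpoly F x) = 0 → z = x := by
    intro z hz
    refine h z ?_ ?_
    · rw [← aeval_map_algebraMap F]
      exact aeval_eq_zero_of_dvd_aeval_eq_zero (minpoly.dvd_map_of_isScalarTower K F x) hz
    · have hdvd : minpoly F x ∣ f.map (algebraMap K F) - C (AdjoinSimple.gen K (aeval x f)) :=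
        minpoly.dvd F x (by simp)
      have := aeval_eq_zero_of_dvd_aeval_eq_zero hdvd hz
      simpa [sub_eq_zero] using this
  have hle := natDegree_le_one_of_separable_of_forall_aeval_eq_zero (hx.tower_top F) hroots
  obtain ⟨y, hy⟩ := minpoly.natDegree_eq_one_iff.mp (le_antisymm hle (minpoly.natDegree_pos hxF))
  exact hy ▸ y.2

theorem natDegree_minpoly_aeval_eq {x : E} (hx : IsIntegral K x) (f : K[X])
    (hmem : x ∈ K⟮aeval x f⟯) :
    (minpoly K (aeval x f)).natDegree = (minpoly K x).natDegree := by
  have hfx : IsIntegral K (aeval x f) :=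
    .of_mem_of_fg _ hx.fg_adjoin_singleton _ (aeval_mem_adjoin_singleton K x)
  have hadjoin : K⟮aeval x f⟯ = K⟮x⟯ := le_antisymm
    (adjoin_simple_le_iff.mpr (aeval_mem_adjoin_simple x f)) (adjoin_simple_le_iff.mpr hmem)
  rw [← adjoin.finrank hfx, ← adjoin.finrank hx, hadjoin]

end Conjugates

section Reciprocal

variable {K E : Type*} [Field E]

theorem aeval_inv_eq_zero_of_reverse_eq_self [CommSemiring K] [Algebra K E] {p : K[X]}
    (hp : p.reverse = p) {z : E} (hz : aeval z p = 0) : aeval z⁻¹ p = 0 := by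
  rcases eq_or_ne z 0 with rfl | hz0
  · simpa using hz
  let := invertibleOfNonzero hz0
  rw [aeval_def, ← invOf_eq_inv, ← hp, eval₂_reverse_eq_zero_iff, ← aeval_def, hz]

theorem reverse_minpoly_eq_self [Field K] [Algebra K E] [NeZero (2 : K)] {x : E}
    (hx : IsIntegral K x) (hx0 : x ≠ 0) (hx1 : x ≠ 1) (hinv : aeval x⁻¹ (minpoly K x) = 0) :
    (minpoly K x).reverse = minpoly K x := by
  set P := minpoly K x
  have hmonic : P.Monic := minpoly.monic hx
  have hdvd : P ∣ P.reverse := minpoly.dvd K x <| by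
    let := invertibleOfNonzero (inv_ne_zero hx0)
    simpa [aeval_def, invOf_eq_inv] using
      (eval₂_reverse_eq_zero_iff (algebraMap K E) x⁻¹ P).mpr hinv
  set c := P.reverse.leadingCoeff
  have hrev : P.reverse = P * C c :=
    eq_mul_leadingCoeff_of_monic_of_dvd_of_natDegree_le hmonic hdvd (reverse_natDegree_le P)
  have hc : c = P.coeff 0 := by
    rw [show c = P.reverse.leadingCoeff from rfl, reverse_leadingCoeff,
      trailingCoeff_eq_coeff_zero (minpoly.coeff_zero_ne_zero hx hx0)]
  have hcc : c * c = 1 := by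
    have := congrArg (coeff · 0) hrev
    simp only [coeff_zero_reverse, hmonic.leadingCoeff, mul_coeff_zero, coeff_C_zero, ← hc] at this
    exact this.symm
  obtain h | h := mul_self_eq_one_iff.mp hcc
  · rw [hrev, h, C_1, mul_one]
  -- an anti-reciprocal polynomial vanishes at `1`, and the only irreducible monic one is `X - 1`
  exfalso
  have hP1 : P.eval 1 = 0 := by
    let : Invertible (1 : K) := invertibleOne
    have h1 := eval₂_reverse_mul_pow (RingHom.id K) 1 P
    rw [hrev, h, invOf_one, one_pow, mul_one, eval₂_mul, eval₂_C, RingHom.id_apply, mul_neg_one,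
      eval₂_id] at h1
    have : (2 : K) * P.eval 1 = 0 := by linear_combination -h1
    exact (mul_eq_zero.mp this).resolve_left two_ne_zero
  have hP : P = X - C 1 := by
    rw [← minpoly.eq_X_sub_C K (1 : K)]
    exact minpoly.eq_of_irreducible_of_monic (minpoly.irreducible hx)
      (by simpa [aeval_def] using hP1) hmonic
  have hx' : aeval x P = 0 := minpoly.aeval K x
  rw [hP, map_sub, aeval_X, aeval_C, map_one, sub_eq_zero] at hx'
  exact hx1 hx'

end Reciprocal

theorem Multiset.card_eq_two_iff_of_mem {α : Type*} {T : Multiset α} (hT : T.Nodup) {a b : α}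
    (hab : a ≠ b) (ha : a ∈ T) (hb : b ∈ T) : card T = 2 ↔ ∀ z ∈ T, z = a ∨ z = b := by
  constructor
  · intro h
    obtain ⟨u, v, rfl⟩ := card_eq_two.mp h
    simp only [insert_eq_cons, mem_cons, mem_singleton] at ha hb ⊢
    grind
  · intro h
    have hT' : T = {a, b} := (hT.ext (by simpa using hab)).mpr fun z =>
      ⟨fun hz => by simpa using h z hz, fun hz => by aesop⟩
    simp [hT']

theorem card_filter_aroots_norm_ne_one_eq_two_iff {p : ℚ[X]} (hp : p.Separable) {l : ℝ}
    (hl : 1 < l) (hpl : aeval l p = 0) (hpl' : aeval l⁻¹ p = 0) :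
    ((p.aroots ℂ).filter (fun z => ‖z‖ ≠ 1)).card = 2 ↔
      ∀ z : ℂ, aeval z p = 0 → ‖z‖ ≠ 1 → z = l ∨ z = (l : ℂ)⁻¹ := by
  have hmem : ∀ r : ℝ, 0 < r → r ≠ 1 → aeval r p = 0 →
      (r : ℂ) ∈ (p.aroots ℂ).filter (fun z => ‖z‖ ≠ 1) := by
    intro r hr0 hr1 hr
    rw [Multiset.mem_filter, mem_aroots, Complex.norm_real, Real.norm_of_nonneg hr0.le]
    exact ⟨⟨hp.ne_zero, (aeval_algebraMap_apply ℂ r p).trans (by rw [hr, map_zero])⟩, hr1⟩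
  have hl0 : 0 < l := by positivity
  have hlinv : l⁻¹ < 1 := inv_lt_one_of_one_lt₀ hl
  have hmem' := hmem l⁻¹ (inv_pos.mpr hl0) hlinv.ne hpl'
  rw [Complex.ofReal_inv] at hmem'
  rw [Multiset.card_eq_two_iff_of_mem ((nodup_roots hp.map).filter _)
    (by exact_mod_cast (hlinv.trans hl).ne') (hmem l hl0 hl.ne' hpl) hmem']
  simp only [Multiset.mem_filter, mem_aroots, and_imp]
  exact ⟨fun h z hz hz1 => h z hp.ne_zero hz hz1, fun h z _ hz hz1 => h z hz hz1⟩

namespace IsSalemNumber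

variable {l : ℝ}

theorem isIntegral_rat (hl : IsSalemNumber l) : IsIntegral ℚ l :=
  hl.2.1.tower_top

theorem aeval_inv_minpoly (hl : IsSalemNumber l) : aeval l⁻¹ (minpoly ℚ l) = 0 :=
  aeval_inv_eq_zero_of_reverse_eq_self hl.2.2.1 (minpoly.aeval ℚ l)

theorem eq_or_eq_inv_of_aeval_minpoly (hl : IsSalemNumber l) {z : ℂ}
    (hz : aeval z (minpoly ℚ l) = 0) (hz1 : ‖z‖ ≠ 1) : z = l ∨ z = (l : ℂ)⁻¹ :=
  (card_filter_aroots_norm_ne_one_eq_two_iff (minpoly.irreducible hl.isIntegral_rat).separable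
    hl.1 (minpoly.aeval ℚ l) hl.aeval_inv_minpoly).mp hl.2.2.2 z hz hz1

theorem eq_of_aeval_minpoly_of_pow_eq (hl : IsSalemNumber l) {k : ℕ} (hk : k ≠ 0) {z : ℂ}
    (hz : aeval z (minpoly ℚ l) = 0) (hzk : z ^ k = (l : ℂ) ^ k) : z = l := by
  have hl0 : 0 < l := by linarith [hl.1]
  have hnorm : ‖z‖ = l := by
    rw [← pow_left_inj₀ (norm_nonneg z) hl0.le hk, ← norm_pow, hzk, norm_pow, Complex.norm_real,
      Real.norm_of_nonneg hl0.le]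
  refine (hl.eq_or_eq_inv_of_aeval_minpoly hz (hnorm ▸ hl.1.ne')).resolve_right fun h => ?_
  rw [h, norm_inv, Complex.norm_real, Real.norm_of_nonneg hl0.le] at hnorm
  linarith [inv_lt_one_of_one_lt₀ hl.1, hl.1]

theorem natDegree_minpoly_pow (hl : IsSalemNumber l) {k : ℕ} (hk : k ≠ 0) :
    (minpoly ℚ (l ^ k)).natDegree = (minpoly ℚ l).natDegree := by
  have hC : ∀ x : ℝ, minpoly ℚ (x : ℂ) = minpoly ℚ x :=
    minpoly.algebraMap_eq (algebraMap ℝ ℂ).injective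
  have hsep : IsSeparable ℚ (l : ℂ) := by
    rw [IsSeparable, hC]
    exact (minpoly.irreducible hl.isIntegral_rat).separable
  have hmem := mem_adjoin_simple_aeval_of_forall hsep (X ^ k) fun z hz hzk =>
    hl.eq_of_aeval_minpoly_of_pow_eq hk (hC l ▸ hz) (by simpa using hzk)
  have := natDegree_minpoly_aeval_eq hsep.isIntegral (X ^ k) hmem
  simpa [← Complex.ofReal_pow, hC] using this

theorem pow (hl : IsSalemNumber l) {k : ℕ} (hk : k ≠ 0) : IsSalemNumber (l ^ k) := by
  have hlk : 1 < l ^ k := one_lt_pow₀ hl.1 hk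
  have hQ : IsIntegral ℚ (l ^ k) := hl.isIntegral_rat.pow k
  have hinv : aeval (l ^ k)⁻¹ (minpoly ℚ (l ^ k)) = 0 := by
    simpa using aeval_minpoly_aeval_eq_zero (X ^ k) hl.aeval_inv_minpoly
  refine ⟨hlk, hl.2.1.pow k, reverse_minpoly_eq_self hQ (by positivity) hlk.ne' hinv, ?_⟩
  rw [card_filter_aroots_norm_ne_one_eq_two_iff (minpoly.irreducible hQ).separable hlk
    (minpoly.aeval ℚ _) hinv]
  intro z hz hz1
  obtain ⟨w, hw, rfl⟩ : z ∈ (fun w => w ^ k) '' {w : ℂ | aeval w (minpoly ℚ l) = 0} := by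
    rw [← setOf_aeval_minpoly_pow_eq_image hl.isIntegral_rat k]
    exact hz
  have hw1 : ‖w‖ ≠ 1 := fun h => hz1 (by rw [norm_pow, h, one_pow])
  rcases hl.eq_or_eq_inv_of_aeval_minpoly hw hw1 with rfl | rfl
  · exact Or.inl (Complex.ofReal_pow l k).symm
  · exact Or.inr (by push_cast; rw [inv_pow])

end IsSalemNumber

theorem salem_power (l : ℝ) (s : ℕ) (hl : IsSalemNumber l)
    (hs : (minpoly ℚ l).natDegree = s) (k : ℕ) (hk : 0 < k) :
    IsSalemNumber (l ^ k) ∧ (minpoly ℚ (l ^ k)).natDegree = s ∧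
      {z : ℂ | Polynomial.aeval z (minpoly ℚ (l ^ k)) = 0} =
        (fun z : ℂ => z ^ k) '' {z : ℂ | Polynomial.aeval z (minpoly ℚ l) = 0} :=
  ⟨hl.pow hk.ne', (hl.natDegree_minpoly_pow hk.ne').trans hs,
    setOf_aeval_minpoly_pow_eq_image hl.isIntegral_rat k⟩
end

section
/- For λ > 1 a real number, the quantity (1/(λ+λ⁻¹))^m · Σ_{m/2 < j ≤ m} C(m,j) · λ^{m−2j} converges to 0 as m → ∞. -/
/-! Every term of the tail has `m < 2j`, so its power of `l ≥ 1` is at most `1` and the tail is at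
most `∑ C(m,j) = 2^m`. The whole expression is then bounded by `(2 / (l + l⁻¹))^m`, a geometric
sequence with ratio below `1` by AM-GM. -/

open Filter Finset

lemma two_lt_add_inv_self {x : ℝ} (hx0 : 0 < x) (hx1 : x ≠ 1) : 2 < x + x⁻¹ := by
  have hsq : 0 < (x - 1) ^ 2 := sq_pos_of_ne_zero (sub_ne_zero.mpr hx1)
  have key : x + x⁻¹ - 2 = (x - 1) ^ 2 / x := by field_simp; ring
  linarith [div_pos hsq hx0]

lemma sum_filter_choose_le_two_pow (m : ℕ) (p : ℕ → Prop) [DecidablePred p] :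
    ∑ j ∈ (range (m + 1)).filter p, (m.choose j : ℝ) ≤ 2 ^ m := by
  calc ∑ j ∈ (range (m + 1)).filter p, (m.choose j : ℝ)
      ≤ ∑ j ∈ range (m + 1), (m.choose j : ℝ) :=
        sum_le_sum_of_subset_of_nonneg (filter_subset _ _) fun _ _ _ => Nat.cast_nonneg _
    _ = 2 ^ m := by exact_mod_cast Nat.sum_range_choose m

lemma binomial_tail_le_two_pow {l : ℝ} (hl : 1 ≤ l) (m : ℕ) :
    ∑ j ∈ (range (m + 1)).filter (fun j => m < 2 * j),
      (m.choose j : ℝ) * l ^ ((m : ℤ) - 2 * j) ≤ 2 ^ m := by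
  refine le_trans (sum_le_sum fun j hj => ?_) (sum_filter_choose_le_two_pow m _)
  have hexp : (m : ℤ) - 2 * j ≤ 0 := by
    have := (mem_filter.mp hj).2
    omega
  exact mul_le_of_le_one_right (Nat.cast_nonneg _) (zpow_le_one_of_nonpos₀ hl hexp)

theorem binomial_tail_tendsto_zero (l : ℝ) (hl : 1 < l) :
    Tendsto (fun m : ℕ =>
        (1 / (l + l⁻¹)) ^ m *
          ∑ j ∈ (Finset.range (m + 1)).filter (fun j => m < 2 * j),
            (Nat.choose m j : ℝ) * l ^ ((m : ℤ) - 2 * j))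
      atTop (nhds 0) := by
  have hl0 : 0 < l := one_pos.trans hl
  have hsum : 2 < l + l⁻¹ := two_lt_add_inv_self hl0 hl.ne'
  have hpos : 0 < l + l⁻¹ := two_pos.trans hsum
  have hgeo : Tendsto (fun m : ℕ => (2 / (l + l⁻¹)) ^ m) atTop (nhds 0) :=
    tendsto_pow_atTop_nhds_zero_of_lt_one (by positivity) ((div_lt_one hpos).mpr hsum)
  refine squeeze_zero (fun m => mul_nonneg (by positivity) (sum_nonneg fun j _ => by positivity))
    (fun m => ?_) hgeo
  calc (1 / (l + l⁻¹)) ^ m * ∑ j ∈ (range (m + 1)).filter (fun j => m < 2 * j),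
        (m.choose j : ℝ) * l ^ ((m : ℤ) - 2 * j)
      ≤ (1 / (l + l⁻¹)) ^ m * 2 ^ m :=
        mul_le_mul_of_nonneg_left (binomial_tail_le_two_pow hl.le m) (by positivity)
    _ = (2 / (l + l⁻¹)) ^ m := by rw [← mul_pow, one_div_mul_eq_div]
end

section
/- Let V be a finite-dimensional real vector space with a symmetric bilinear form of signature (1, m−1), and fix w ∈ V with w² > 0. For any integer K < 0, the set {v ∈ V : v² = K and 0 ≤ v·w ≤ 1} is compact. -/
/-!
In a basis adapted to the signature, `B` is negative definite on the kernel `N` of the first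
coordinate functional `f`. If `u ≠ 0` is `B`-orthogonal to `w` and `f u ≠ 0`, then
`f w • u - f u • w ∈ N` has square `(f w)² B(u,u) + (f u)² B(w,w)`, which must be `≤ 0`; hence
`B(u,u) < 0`. So `B` is negative definite on `w^⊥`, and by compactness of the unit sphere of
`w^⊥` uniformly so: `ε ‖u‖² ≤ -B(u,u)`. Splitting `v = t • w + u` with `t = B(v,w) / B(w,w)`
and `u ⊥ w` gives `ε ‖u‖² ≤ B(v,w)² / B(w,w) - B(v,v)`, which bounds the slice.
-/

/-- A symmetric bilinear form on `V` has signature `(1, n-1)` if there is an orthogonal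
basis indexed by `Fin n` with one vector of positive square (the one indexed by 0)
and all others of negative square. -/
def IsLorentzian {V : Type*} [AddCommGroup V] [Module ℝ V]
    (B : LinearMap.BilinForm ℝ V) (n : ℕ) : Prop :=
  ∃ b : Module.Basis (Fin n) ℝ V,
    (∀ i j, i ≠ j → B (b i) (b j) = 0) ∧
    (∀ i : Fin n, (i : ℕ) = 0 → 0 < B (b i) (b i)) ∧
    (∀ i : Fin n, (i : ℕ) ≠ 0 → B (b i) (b i) < 0)

open LinearMap (BilinForm)

namespace LinearMap.BilinForm

section Algebraic

variable {V : Type*} [AddCommGroup V] [Module ℝ V] {B : BilinForm ℝ V}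

theorem apply_self_eq_sum_of_iIsOrtho {ι : Type*} [Fintype ι] {b : Module.Basis ι ℝ V}
    (hb : B.iIsOrtho b) (x : V) : B x x = ∑ i, b.repr x i ^ 2 * B (b i) (b i) := by
  conv_lhs => rw [← b.sum_repr x]
  simp only [map_sum, map_smul, LinearMap.sum_apply, LinearMap.smul_apply, smul_eq_mul]
  refine Finset.sum_congr rfl fun i _ => ?_
  rw [Finset.sum_eq_single i (fun j _ hj => by simp [iIsOrtho_def.1 hb j i hj])
    (fun h => absurd (Finset.mem_univ i) h)]
  ring

theorem apply_self_neg_of_coord_eq_zero {ι : Type*} [Fintype ι] {b : Module.Basis ι ℝ V}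
    (hb : B.iIsOrtho b) {i₀ : ι} (hneg : ∀ i ≠ i₀, B (b i) (b i) < 0) {x : V}
    (hx : b.coord i₀ x = 0) (hx0 : x ≠ 0) : B x x < 0 := by
  rw [Module.Basis.coord_apply] at hx
  have hterm : ∀ i, b.repr x i ^ 2 * B (b i) (b i) ≤ 0 := fun i => by
    rcases eq_or_ne i i₀ with rfl | hi
    · simp [hx]
    · exact mul_nonpos_of_nonneg_of_nonpos (sq_nonneg _) (hneg i hi).le
  obtain ⟨j, hj⟩ : ∃ j, b.repr x j ≠ 0 := by
    by_contra! h
    exact hx0 (b.repr.injective (by ext j; simp [h j]))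
  have hji₀ : j ≠ i₀ := by rintro rfl; exact hj hx
  calc B x x = ∑ i, b.repr x i ^ 2 * B (b i) (b i) := apply_self_eq_sum_of_iIsOrtho hb x
    _ < ∑ _i : ι, (0 : ℝ) := Finset.sum_lt_sum (fun i _ => hterm i)
        ⟨j, Finset.mem_univ j, mul_neg_of_pos_of_neg (sq_pos_of_ne_zero hj) (hneg j hji₀)⟩
    _ = 0 := Finset.sum_const_zero

theorem apply_self_neg_of_apply_eq_zero (hB : B.IsSymm) (f : Module.Dual ℝ V)
    (hf : ∀ x, f x = 0 → x ≠ 0 → B x x < 0) {w u : V} (hw : 0 < B w w) (huw : B u w = 0)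
    (hu : u ≠ 0) : B u u < 0 := by
  by_cases hfu : f u = 0
  · exact hf u hfu hu
  set x := f w • u - f u • w
  have hfx : f x = 0 := by simp only [x, map_sub, map_smul, smul_eq_mul]; ring
  have hxx : B x x ≤ 0 := by
    rcases eq_or_ne x 0 with hx | hx
    · simp [hx]
    · exact (hf x hfx hx).le
  have hwu : B w u = 0 := (hB.eq w u).trans huw
  have hexpand : B x x = f w ^ 2 * B u u + f u ^ 2 * B w w := by
    simp only [x, map_sub, map_smul, LinearMap.sub_apply, LinearMap.smul_apply, smul_eq_mul,
      huw, hwu]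
    ring
  by_contra! hu
  nlinarith [mul_nonneg (sq_nonneg (f w)) hu, mul_pos (sq_pos_of_ne_zero hfu) hw]

end Algebraic

section Normed

variable {V : Type*} [NormedAddCommGroup V] [NormedSpace ℝ V] {B : BilinForm ℝ V}

theorem mul_norm_sub_smul_sq_le (hB : B.IsSymm) {w : V} (hw : 0 < B w w) {ε : ℝ}
    (hε : ∀ u, B u w = 0 → ε * ‖u‖ ^ 2 ≤ -B u u) (v : V) :
    ε * ‖v - (B v w / B w w) • w‖ ^ 2 ≤ B v w ^ 2 / B w w - B v v := by
  have hwv : B w v = B v w := hB.eq w v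
  have hortho : B (v - (B v w / B w w) • w) w = 0 := by
    simp only [map_sub, map_smul, LinearMap.sub_apply, LinearMap.smul_apply, smul_eq_mul]
    field_simp
    ring
  refine (hε _ hortho).trans_eq ?_
  simp only [map_sub, map_smul, LinearMap.sub_apply, LinearMap.smul_apply, smul_eq_mul, hwv]
  field_simp
  ring

variable [FiniteDimensional ℝ V] (B)

theorem continuous_apply_apply : Continuous fun p : V × V => B p.1 p.2 :=
  B.toContinuousBilinearMap.continuous₂

theorem continuous_apply_self : Continuous fun u : V => B u u :=
  B.continuous_apply_apply.comp (continuous_id.prodMk continuous_id)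

variable {B}

theorem exists_pos_mul_norm_sq_le_neg_apply_self {W : Submodule ℝ V}
    (hneg : ∀ u ∈ W, u ≠ 0 → B u u < 0) : ∃ ε > 0, ∀ u ∈ W, ε * ‖u‖ ^ 2 ≤ -B u u := by
  have hS : IsCompact ((W : Set V) ∩ Metric.sphere 0 1) :=
    (isCompact_sphere 0 1).inter_left W.closed_of_finiteDimensional
  obtain ⟨ε, hε, hεS⟩ := hS.exists_forall_le' B.continuous_apply_self.neg.continuousOn
    (a := 0) fun u hu => neg_pos.2 (hneg u hu.1 (ne_zero_of_mem_unit_sphere ⟨u, hu.2⟩))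
  refine ⟨ε, hε, fun u hu => ?_⟩
  rcases eq_or_ne u 0 with rfl | hu0
  · simp
  have hn : 0 < ‖u‖ := norm_pos_iff.2 hu0
  have hunit : ‖u‖⁻¹ • u ∈ (W : Set V) ∩ Metric.sphere 0 1 :=
    ⟨W.smul_mem _ hu, by simp [norm_smul, hn.ne']⟩
  have h : ε ≤ -B (‖u‖⁻¹ • u) (‖u‖⁻¹ • u) := hεS _ hunit
  simp only [map_smul, LinearMap.smul_apply, smul_eq_mul] at h
  calc ε * ‖u‖ ^ 2 ≤ -(‖u‖⁻¹ * (‖u‖⁻¹ * B u u)) * ‖u‖ ^ 2 := by gcongr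
    _ = -B u u := by field_simp

theorem isBounded_setOf_le_apply_self (hB : B.IsSymm) {w : V} (hw : 0 < B w w)
    (hneg : ∀ u, B u w = 0 → u ≠ 0 → B u u < 0) (c r : ℝ) :
    Bornology.IsBounded {v | c ≤ B v v ∧ |B v w| ≤ r} := by
  obtain ⟨ε, hε, hεW⟩ := exists_pos_mul_norm_sq_le_neg_apply_self (W := LinearMap.ker (B.flip w))
    fun u hu => hneg u (by simpa using hu)
  refine isBounded_iff_forall_norm_le.2
    ⟨r / B w w * ‖w‖ + √((r ^ 2 / B w w - c) / ε), fun v ⟨hc, hr⟩ => ?_⟩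
  set u := v - (B v w / B w w) • w
  have hu : ‖u‖ ≤ √((r ^ 2 / B w w - c) / ε) := by
    have hsq : B v w ^ 2 ≤ r ^ 2 := sq_le_sq' (abs_le.1 hr).1 (abs_le.1 hr).2
    have h := mul_norm_sub_smul_sq_le hB hw (fun u hu => hεW u (by simpa using hu)) v
    rw [← abs_norm]
    refine Real.abs_le_sqrt ((le_div_iff₀ hε).2 ?_)
    have : B v w ^ 2 / B w w ≤ r ^ 2 / B w w := by gcongr
    linarith
  calc ‖v‖ = ‖(B v w / B w w) • w + u‖ := by rw [add_sub_cancel]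
    _ ≤ ‖(B v w / B w w) • w‖ + ‖u‖ := norm_add_le _ _
    _ = |B v w| / B w w * ‖w‖ + ‖u‖ := by
      rw [norm_smul, Real.norm_eq_abs, abs_div, abs_of_pos hw]
    _ ≤ r / B w w * ‖w‖ + √((r ^ 2 / B w w - c) / ε) := by gcongr

end Normed

end LinearMap.BilinForm

open LinearMap.BilinForm in
theorem compact_negative_slice_general (V : Type*) [NormedAddCommGroup V] [NormedSpace ℝ V]
    [FiniteDimensional ℝ V] (m : ℕ) (B : LinearMap.BilinForm ℝ V) (hsymm : B.IsSymm)
    (hB : IsLorentzian B m) (w : V) (hw : 0 < B w w) (K : ℤ) :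
    IsCompact {v : V | B v v = (K : ℝ) ∧ 0 ≤ B v w ∧ B v w ≤ 1} := by
  obtain ⟨b, horth, -, hneg⟩ := hB
  have : Nontrivial V := ⟨⟨w, 0, fun h => by simp [h] at hw⟩⟩
  obtain ⟨i⟩ := b.index_nonempty
  let i₀ : Fin m := ⟨0, i.pos⟩
  have hneg_ker : ∀ x, b.coord i₀ x = 0 → x ≠ 0 → B x x < 0 := fun x =>
    apply_self_neg_of_coord_eq_zero (iIsOrtho_def.2 horth)
      fun i hi => hneg i fun h => hi (Fin.ext h)
  have hneg_perp : ∀ u, B u w = 0 → u ≠ 0 → B u u < 0 := fun u =>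
    apply_self_neg_of_apply_eq_zero hsymm _ hneg_ker hw
  have hvw : Continuous fun v => B v w :=
    (continuous_apply_apply B).comp (continuous_id.prodMk continuous_const)
  have hclosed : IsClosed {v : V | B v v = (K : ℝ) ∧ 0 ≤ B v w ∧ B v w ≤ 1} :=
    (isClosed_eq (continuous_apply_self B) continuous_const).inter
      ((isClosed_le continuous_const hvw).inter (isClosed_le hvw continuous_const))
  refine Metric.isCompact_of_isClosed_isBounded hclosed
    ((isBounded_setOf_le_apply_self hsymm hw hneg_perp K 1).subset fun v hv => ?_)
  exact ⟨hv.1.ge, abs_le.2 ⟨by linarith [hv.2.1], hv.2.2⟩⟩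

theorem compact_negative_slice (V : Type*) [NormedAddCommGroup V] [NormedSpace ℝ V]
    [FiniteDimensional ℝ V] (m : ℕ) (B : LinearMap.BilinForm ℝ V) (hsymm : B.IsSymm)
    (hB : IsLorentzian B m) (w : V) (hw : 0 < B w w) (K : ℤ) (hK : K < 0) :
    IsCompact {v : V | B v v = (K : ℝ) ∧ 0 ≤ B v w ∧ B v w ≤ 1} :=
  compact_negative_slice_general V m B hsymm hB w hw K
end

section
/- Let L be a free ℤ-module of finite rank with a symmetric bilinear form of signature (1, m−1) on L ⊗ ℝ, and fix w ∈ L ⊗ ℝ with w² > 0. For any B < 0 and ε > 0, the set of lattice vectors v ∈ L with B ≤ v² ≤ −1 and 0 ≤ v·w ≤ ε is finite. -/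
/-!
If `w · w > 0`, then `w⊥` is negative definite: a vector `y ⊥ w` with `y · y ≥ 0` combines with
`w` into a vector of vanishing time coordinate and nonnegative square, which forces `y = 0`.
Hence `x ↦ 2 (x · w)² - (w · w) (x · x)` is positive definite on `ℝ ⊗ L`, so it dominates a
multiple of the squared norm of the coordinates in a `ℤ`-basis of `L`. On the vectors in question
it is at most `2 ε² - (w · w) Bd`, so their coordinates are bounded integers.
-/

open TensorProduct

namespace LinearMap.BilinForm

section CommSemiring

variable {R M ι : Type*} [CommSemiring R] [AddCommMonoid M] [Module R M] [Fintype ι]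
  {β : LinearMap.BilinForm R M} {b : Module.Basis ι R M}

theorem apply_eq_sum_of_iIsOrtho (hb : β.iIsOrtho b) (x y : M) :
    β x y = ∑ i, b.repr x i * b.repr y i * β (b i) (b i) := by
  classical
  conv_lhs => rw [← b.sum_repr x, ← b.sum_repr y]
  simp_rw [sum_left, sum_right, smul_left, smul_right]
  refine Finset.sum_congr rfl fun i _ => ?_
  rw [Finset.sum_eq_single i (fun j _ hji => by rw [hb hji.symm, mul_zero, mul_zero])
    (by simp)]
  ring

theorem isSymm_of_iIsOrtho (hb : β.iIsOrtho b) : β.IsSymm :=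
  ⟨fun x y => by
    simp only [apply_eq_sum_of_iIsOrtho hb x y, apply_eq_sum_of_iIsOrtho hb y x,
      mul_comm (b.repr x _)]⟩

end CommSemiring

section OrderedRing

variable {R M ι : Type*} [CommRing R] [LinearOrder R] [IsStrictOrderedRing R]
  [AddCommGroup M] [Module R M] [Fintype ι] {β : LinearMap.BilinForm R M}
  {b : Module.Basis ι R M}

theorem apply_self_neg_of_iIsOrtho (hb : β.iIsOrtho b) {z : M} (hz : z ≠ 0)
    (hneg : ∀ i, b.repr z i ≠ 0 → β (b i) (b i) < 0) : β z z < 0 := by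
  have term_neg : ∀ i, b.repr z i ≠ 0 → b.repr z i * b.repr z i * β (b i) (b i) < 0 :=
    fun i hi => mul_neg_of_pos_of_neg (mul_self_pos.2 hi) (hneg i hi)
  obtain ⟨i, hi⟩ : ∃ i, b.repr z i ≠ 0 := by
    by_contra! h
    exact hz (b.repr.map_eq_zero_iff.mp (Finsupp.ext h))
  rw [apply_eq_sum_of_iIsOrtho hb]
  refine Finset.sum_neg' (fun j _ => ?_) ⟨i, Finset.mem_univ i, term_neg i hi⟩
  by_cases hj : b.repr z j = 0
  · simp [hj]
  · exact (term_neg j hj).le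

end OrderedRing

variable {R M : Type*} [CommRing R] [AddCommGroup M] [Module R M]

/-- When `β w w` is invertible, this is `β w w` times `a • w + y ↦ β (a • w) (a • w) - β y y`
(`y ⊥ w`): the form `β` with its sign reversed on `w⊥`. -/
def majorant (β : LinearMap.BilinForm R M) (w : M) : QuadraticForm R M :=
  2 • QuadraticMap.linMulLin (β.flip w) (β.flip w) - β w w • β.toQuadraticMap

theorem majorant_apply (β : LinearMap.BilinForm R M) (w x : M) :
    β.majorant w x = 2 * β x w ^ 2 - β w w * β x x := by
  simp [majorant, sq, two_mul]

end LinearMap.BilinForm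

namespace IsLorentzian

variable {V : Type*} [AddCommGroup V] [Module ℝ V] {β : LinearMap.BilinForm ℝ V} {n : ℕ}

theorem isSymm (h : IsLorentzian β n) : β.IsSymm :=
  let ⟨_, hb, _⟩ := h
  LinearMap.BilinForm.isSymm_of_iIsOrtho hb

theorem apply_self_neg_of_apply_eq_zero (h : IsLorentzian β n) {w y : V} (hw : 0 < β w w)
    (hyw : β y w = 0) (hy : y ≠ 0) : β y y < 0 := by
  obtain ⟨b, hb, -, hneg⟩ := h
  have hwy : β w y = 0 := ((LinearMap.BilinForm.isSymm_of_iIsOrtho hb).eq w y).trans hyw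
  have neg_of_time_eq_zero : ∀ z : V, z ≠ 0 →
      (∀ i : Fin n, (i : ℕ) = 0 → b.repr z i = 0) → β z z < 0 :=
    fun z hz hz0 => LinearMap.BilinForm.apply_self_neg_of_iIsOrtho hb hz fun i hi =>
      hneg i fun h0 => hi (hz0 i h0)
  obtain ⟨t, ht, hwt⟩ : ∃ t : Fin n, (t : ℕ) = 0 ∧ b.repr w t ≠ 0 := by
    by_contra! h
    exact hw.not_gt (neg_of_time_eq_zero w (by rintro rfl; simp at hw) h)
  by_contra! hyy
  set z := b.repr y t • w - b.repr w t • y with hz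
  have hzz : β z z = b.repr y t ^ 2 * β w w + b.repr w t ^ 2 * β y y := by
    simp only [hz, map_sub, map_smul, LinearMap.sub_apply, LinearMap.smul_apply, smul_eq_mul,
      hyw, hwy]
    ring
  have hz0 : z = 0 := by
    by_contra hz0
    refine (neg_of_time_eq_zero z hz0 fun i hi => ?_).not_ge (by rw [hzz]; positivity)
    rw [show i = t from Fin.ext (hi.trans ht.symm), hz]
    simp [mul_comm]
  have hyt : b.repr y t = 0 := by
    have hzw : β z w = b.repr y t * β w w := by simp [hz, hyw]
    rw [hz0, map_zero, LinearMap.zero_apply] at hzw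
    exact (mul_eq_zero.mp hzw.symm).resolve_right hw.ne'
  rw [hz, hyt, zero_smul, zero_sub, neg_eq_zero, smul_eq_zero] at hz0
  exact hy (hz0.resolve_left hwt)

theorem majorant_posDef (h : IsLorentzian β n) {w : V} (hw : 0 < β w w) :
    (β.majorant w).PosDef := by
  intro x hx
  -- `y` is `β w w` times the component of `x` in `w⊥`
  set y := β w w • x - β x w • w with hy
  have hyw : β y w = 0 := by simp [hy]; ring
  have scaled_majorant : β w w * β.majorant w x = β w w * β x w ^ 2 - β y y := by
    simp [LinearMap.BilinForm.majorant_apply, hy, h.isSymm.eq w x]; ring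
  refine pos_of_mul_pos_right (scaled_majorant ▸ ?_) hw.le
  by_cases hy0 : y = 0
  · have hxw : β x w ≠ 0 := fun h0 => hx (by simpa [hy, h0, hw.ne'] using hy0)
    simp only [hy0, map_zero, sub_zero]
    positivity
  · have := h.apply_self_neg_of_apply_eq_zero hw hyw hy0
    nlinarith [sq_nonneg (β x w)]

end IsLorentzian

namespace QuadraticMap.PosDef

theorem exists_pos_mul_norm_sq_le {E : Type*} [NormedAddCommGroup E] [NormedSpace ℝ E]
    [FiniteDimensional ℝ E] {Q : QuadraticForm ℝ E} (hQ : Q.PosDef) :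
    ∃ δ > 0, ∀ x, δ * ‖x‖ ^ 2 ≤ Q x := by
  rcases subsingleton_or_nontrivial E with hE | hE
  · exact ⟨1, one_pos, fun x => by simp [Subsingleton.elim x 0]⟩
  have hcont : Continuous Q := by
    have := (associated Q).toContinuousBilinearMap.continuous.clm_apply continuous_id
    simpa [LinearMap.toContinuousBilinearMap_apply, associated_eq_self_apply] using this
  obtain ⟨x₀, hx₀, hmin⟩ := (isCompact_sphere (0 : E) 1).exists_isMinOn
    (NormedSpace.sphere_nonempty.mpr zero_le_one) hcont.continuousOn
  have hx₀ : x₀ ≠ 0 := ne_zero_of_mem_sphere one_ne_zero ⟨x₀, hx₀⟩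
  refine ⟨Q x₀, hQ x₀ hx₀, fun x => ?_⟩
  rcases eq_or_ne x 0 with rfl | hx
  · simp
  have hnorm : ‖x‖ ≠ 0 := norm_ne_zero_iff.mpr hx
  have hu : ‖x‖⁻¹ • x ∈ Metric.sphere (0 : E) 1 := by simp [norm_smul, hnorm]
  calc Q x₀ * ‖x‖ ^ 2 ≤ Q (‖x‖⁻¹ • x) * ‖x‖ ^ 2 := by gcongr; exact hmin hu
    _ = Q x := by rw [QuadraticMap.map_smul, smul_eq_mul]; field_simp

theorem finite_setOf_apply_intCast_le {ι : Type*} [Fintype ι] {Q : QuadraticForm ℝ (ι → ℝ)}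
    (hQ : Q.PosDef) (C : ℝ) : {c : ι → ℤ | Q (fun i => (c i : ℝ)) ≤ C}.Finite := by
  obtain ⟨δ, hδ, hQδ⟩ := hQ.exists_pos_mul_norm_sq_le
  refine ((isCompact_closedBall (0 : ι → ℤ) √(C / δ)).finite
    DiscreteTopology.isDiscrete).subset fun c hc => ?_
  rw [mem_closedBall_zero_iff, pi_norm_le_iff_of_nonneg (Real.sqrt_nonneg _)]
  intro i
  rw [← Int.norm_cast_real]
  refine (norm_le_pi_norm (fun i => (c i : ℝ)) i).trans (Real.le_sqrt_of_sq_le ?_)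
  rw [le_div_iff₀ hδ, mul_comm]
  exact (hQδ _).trans hc

theorem finite_setOf_apply_one_tmul_le {L : Type*} [AddCommGroup L] [Module ℤ L]
    [Module.Free ℤ L] [Module.Finite ℤ L] {Q : QuadraticForm ℝ (ℝ ⊗[ℤ] L)} (hQ : Q.PosDef)
    (C : ℝ) : {v : L | Q ((1 : ℝ) ⊗ₜ v) ≤ C}.Finite := by
  set bL := Module.Free.chooseBasis ℤ L
  set bR := bL.baseChange ℝ
  have hQR : (Q.basisRepr bR).PosDef := fun x hx =>
    hQ _ (bR.equivFun.symm.map_ne_zero_iff.mpr hx)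
  have hcoord : ∀ v : L, bR.equivFun ((1 : ℝ) ⊗ₜ v) = fun i => (bL.equivFun v i : ℝ) := by
    intro v; ext i; simp [bR]
  refine ((hQR.finite_setOf_apply_intCast_le C).preimage bL.equivFun.injective.injOn).subset
    fun v hv => ?_
  change Q (bR.equivFun.symm _) ≤ C
  rwa [← hcoord, LinearEquiv.symm_apply_apply]

end QuadraticMap.PosDef

theorem finitely_many_bounded_negative_lattice_vectors_general
    (L : Type*) [AddCommGroup L] [Module ℤ L] [Module.Free ℤ L] [Module.Finite ℤ L]
    (B : LinearMap.BilinForm ℤ L) (m : ℕ)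
    (hB : IsLorentzian (B.baseChange ℝ) m)
    (w : ℝ ⊗[ℤ] L) (hw : 0 < (B.baseChange ℝ) w w)
    (Bd : ℤ) (ε : ℝ) :
    {v : L | Bd ≤ B v v ∧ B v v ≤ -1 ∧
        0 ≤ (B.baseChange ℝ) ((1 : ℝ) ⊗ₜ[ℤ] v) w ∧
        (B.baseChange ℝ) ((1 : ℝ) ⊗ₜ[ℤ] v) w ≤ ε}.Finite := by
  refine ((hB.majorant_posDef hw).finite_setOf_apply_one_tmul_le
    (2 * ε ^ 2 - (B.baseChange ℝ) w w * Bd)).subset fun v ⟨hlow, _, hpos, hle⟩ => ?_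
  have hvv : (B.baseChange ℝ) ((1 : ℝ) ⊗ₜ[ℤ] v) ((1 : ℝ) ⊗ₜ[ℤ] v) = B v v := by
    simp [LinearMap.BilinForm.baseChange_tmul]
  have hlow' : (Bd : ℝ) ≤ B v v := mod_cast hlow
  simp only [Set.mem_ofPred_eq, LinearMap.BilinForm.majorant_apply, hvv]
  nlinarith [mul_le_mul_of_nonneg_left hlow' hw.le, pow_le_pow_left₀ hpos hle 2]

theorem finitely_many_bounded_negative_lattice_vectors
    (L : Type*) [AddCommGroup L] [Module ℤ L] [Module.Free ℤ L] [Module.Finite ℤ L]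
    (B : LinearMap.BilinForm ℤ L) (hsymm : B.IsSymm) (m : ℕ)
    (hB : IsLorentzian (B.baseChange ℝ) m)
    (w : ℝ ⊗[ℤ] L) (hw : 0 < (B.baseChange ℝ) w w)
    (Bd : ℤ) (hBd : Bd < 0) (ε : ℝ) (hε : 0 < ε) :
    {v : L | Bd ≤ B v v ∧ B v v ≤ -1 ∧
        0 ≤ (B.baseChange ℝ) ((1 : ℝ) ⊗ₜ[ℤ] v) w ∧
        (B.baseChange ℝ) ((1 : ℝ) ⊗ₜ[ℤ] v) w ≤ ε}.Finite :=
  finitely_many_bounded_negative_lattice_vectors_general L B m hB w hw Bd ε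
end
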